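/- arXiv:1304.1438 — 2 statements merged into one kernel-verified Lean document; each statement's English description precedes it below -/
import Mathlib

section
/- (Pointwise stability inequality) Let f = e^ψ be a smooth k-homogeneous density with k < −n or k > 0 on a solid cone in ℝ^{n+1}, satisfying Ric_f^k := −∇²ψ − (1/k) dψ⊗dψ ≥ 0. Let Σ be a smooth orientable hypersurface in the punctured cone with unit normal N, Euclidean mean curvature H, squared second fundamental form norm |σ|², and f-mean curvature H_f = nH − ⟨∇ψ, N⟩. Then at every point of Σ, Ric_f(N,N) + |σ|² − H_f²/(n+k) ≥ n/(k(n+k)) · (⟨∇ψ,N⟩ + kH)² ≥ 0, where Ric_f := −∇²ψ. -/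
open Real

local notation "⟪" x ", " y "⟫" => @inner ℝ _ _ x y

/-- Pointwise stability inequality: for a smooth `k`-homogeneous density
`f = e^ψ` with `k < -n` or `k > 0` on an open cone satisfying
`Ric_f^k = -∇²ψ - (1/k) dψ⊗dψ ≥ 0`, and a hypersurface `S` in the cone with
unit normal `N`, mean curvature `H` and squared second fundamental form `|σ|²`
(satisfying `|σ|² ≥ nH²`), one has at every point of `S`:
`Ric_f(N,N) + |σ|² − H_f²/(n+k) ≥ (n/(k(n+k)))(⟨∇ψ,N⟩ + kH)² ≥ 0`. -/
theorem pointwise_stability_inequality (n : ℕ) (hn : 1 ≤ n) (k : ℝ)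
    (hk : k < -(n : ℝ) ∨ 0 < k)
    (C : Set (EuclideanSpace ℝ (Fin (n + 1)))) (hC : IsOpen C)
    (h0 : (0 : EuclideanSpace ℝ (Fin (n + 1))) ∉ C)
    (hcone : ∀ t : ℝ, 0 < t → ∀ p ∈ C, t • p ∈ C)
    (ψ : EuclideanSpace ℝ (Fin (n + 1)) → ℝ)
    (hψ : ContDiffOn ℝ (⊤ : ℕ∞) ψ C)
    (hhom : ∀ t : ℝ, 0 < t → ∀ p ∈ C, ψ (t • p) = k * Real.log t + ψ p)
    (hRic : ∀ p ∈ C, ∀ v : EuclideanSpace ℝ (Fin (n + 1)),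
      0 ≤ -(⟪(fderiv ℝ (gradient ψ) p) v, v⟫) - (1 / k) * ⟪gradient ψ p, v⟫ ^ 2)
    (S : Set (EuclideanSpace ℝ (Fin (n + 1)))) (hSC : S ⊆ C)
    (N : EuclideanSpace ℝ (Fin (n + 1)) → EuclideanSpace ℝ (Fin (n + 1)))
    (hNunit : ∀ p ∈ S, ‖N p‖ = 1)
    (H σsq : EuclideanSpace ℝ (Fin (n + 1)) → ℝ)
    (hσ : ∀ p ∈ S, (n : ℝ) * H p ^ 2 ≤ σsq p) :
    ∀ p ∈ S,
      (n : ℝ) / (k * ((n : ℝ) + k)) * (⟪gradient ψ p, N p⟫ + k * H p) ^ 2 ≤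
          -(⟪(fderiv ℝ (gradient ψ) p) (N p), N p⟫) + σsq p
            - ((n : ℝ) * H p - ⟪gradient ψ p, N p⟫) ^ 2 / ((n : ℝ) + k) ∧
      0 ≤ (n : ℝ) / (k * ((n : ℝ) + k)) * (⟪gradient ψ p, N p⟫ + k * H p) ^ 2 := by
  intro p hp
  have hpc : p ∈ C := hSC hp
  set a : ℝ := ⟪gradient ψ p, N p⟫ with ha
  set R : ℝ := -(⟪(fderiv ℝ (gradient ψ) p) (N p), N p⟫) with hR
  have h1 : 0 ≤ R - (1 / k) * a ^ 2 := hRic p hpc (N p)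
  have h2 : (n : ℝ) * H p ^ 2 ≤ σsq p := hσ p hp
  have hn' : (1:ℝ) ≤ n := by exact_mod_cast hn
  have hk0 : k ≠ 0 := by rcases hk with h | h <;> nlinarith
  have hnk : (n : ℝ) + k ≠ 0 := by
    rcases hk with h | h
    · linarith
    · have : (0:ℝ) < n := by exact_mod_cast Nat.pos_of_ne_zero (by omega)
      linarith
  have hkk : 0 < k * ((n : ℝ) + k) := by
    rcases hk with h | h
    · have : (n:ℝ) + k < 0 := by linarith
      nlinarith
    · nlinarith
  have hid : (1 / k) * a ^ 2 + (n : ℝ) * H p ^ 2 - ((n : ℝ) * H p - a) ^ 2 / ((n : ℝ) + k)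
      = (n : ℝ) / (k * ((n : ℝ) + k)) * (a + k * H p) ^ 2 := by
    field_simp
    ring
  constructor
  · have hmono : ((n : ℝ) * H p ^ 2 - ((n:ℝ) * H p - a) ^ 2 / ((n:ℝ)+k))
        + (1/k) * a ^ 2 ≤ R + σsq p - ((n : ℝ) * H p - a) ^ 2 / ((n : ℝ) + k) := by
      linarith
    linarith [hid, hmono]
  · positivity
end

section
/- Let f(p) = |p|^k be the radial k-homogeneous density on ℝ^{n+1} \ {0}, and let Σ be a round sphere of radius r centered at p₀ with |p₀| = r (so 0 ∈ Σ), with unit normal N(p) = (p₀ − p)/r. Then the f-mean curvature H_f(p) = n/r − k⟨p, N(p)⟩/|p|² is constant equal to (2n+k)/(2r) for every p ∈ Σ with p ≠ 0. -/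
/-! On a sphere through the origin with centre `p₀`, `|p - p₀|² = |p₀|²` expands to
`|p|² = 2⟨p, p₀⟩`. Hence `⟨p, N(p)⟩ = -|p|²/(2r)`, and the density term
`-k⟨p, N⟩/|p|²` is the constant `k/(2r)`. -/

open Real

local notation "⟪" x ", " y "⟫" => @inner ℝ _ _ x y

theorem inner_sub_eq_neg_half_norm_sq_of_norm_sub_eq_norm {E : Type*} [NormedAddCommGroup E]
    [InnerProductSpace ℝ E] {p p₀ : E} (h : ‖p - p₀‖ = ‖p₀‖) :
    ⟪p, p₀ - p⟫ = -(‖p‖ ^ 2 / 2) := by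
  have hsq := norm_sub_sq_real p p₀
  rw [h] at hsq
  rw [inner_sub_right, real_inner_self_eq_norm_sq]
  linarith

/-- For the radial density `f(p) = |p|^k` on `ℝ^{n+1} \ {0}` and a sphere of
radius `r` centered at `p₀` with `|p₀| = r` (so that `0` lies on the sphere),
with unit normal `N(p) = (p₀ − p)/r`, the `f`-mean curvature
`H_f(p) = n/r − k⟨p, N(p)⟩/|p|²` is constant equal to `(2n+k)/(2r)` at every
point `p ≠ 0` of the sphere. -/
theorem f_mean_curvature_sphere_through_origin (n : ℕ) (k r : ℝ) (hr : 0 < r)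
    (p₀ : EuclideanSpace ℝ (Fin (n + 1))) (hp₀ : ‖p₀‖ = r) :
    ∀ p : EuclideanSpace ℝ (Fin (n + 1)), ‖p - p₀‖ = r → p ≠ 0 →
      (n : ℝ) / r - k * ⟪p, r⁻¹ • (p₀ - p)⟫ / ‖p‖ ^ 2 = (2 * (n : ℝ) + k) / (2 * r) := by
  intro p hp hp0
  have hnormal : ⟪p, r⁻¹ • (p₀ - p)⟫ = -(‖p‖ ^ 2 / (2 * r)) := by
    rw [inner_smul_right, inner_sub_eq_neg_half_norm_sq_of_norm_sub_eq_norm (hp.trans hp₀.symm)]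
    field_simp
  have hp_sq : ‖p‖ ^ 2 ≠ 0 := pow_ne_zero _ (norm_ne_zero_iff.mpr hp0)
  rw [hnormal]
  field_simp
  ring
end
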